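/- Let Π = (R, CR) be a finite ground CR-program over a set of atoms At, and let τ(Π) be its weak-constraint translation using fresh atoms appl_1, …, appl_N. If S is an answer set of the weak-constraint program τ(Π), then the set X = {r_i ∈ CR : S violates the i-th weak constraint :~ appl_i, B_i} is an abductive support of Π, and the number of weak constraints of τ(Π) violated by S equals the cardinality of X. -/

import Mathlib

/-- A literal is an atom or its classical negation. -/
inductive Lit (α : Type) where
  | pos : α → Lit α
  | neg : α → Lit α
deriving DecidableEq

/-- The atom a literal is formed from. -/
def Lit.atom {α : Type} : Lit α → α
  | .pos a => a
  | .neg a => a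

/-- A set of literals is consistent if it contains no complementary pair. -/
def Consistent {α : Type} (S : Set (Lit α)) : Prop :=
  ∀ a : α, ¬ (Lit.pos a ∈ S ∧ Lit.neg a ∈ S)

/-- A ground rule  l₀ ∨ … ∨ l_m ← l_{m+1}, …, l_k, not l_{k+1}, …, not l_n. -/
structure Rule (α : Type) where
  head : List (Lit α)
  pbody : List (Lit α)
  nbody : List (Lit α)
deriving DecidableEq

/-- `S` satisfies a rule. -/
def Satisfies {α : Type} (S : Set (Lit α)) (r : Rule α) : Prop :=
  ((∀ l ∈ r.pbody, l ∈ S) ∧ (∀ l ∈ r.nbody, l ∉ S)) → ∃ l ∈ r.head, l ∈ S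

/-- The reduct of a ground program relative to `S`. -/
def reduct {α : Type} (P : Set (Rule α)) (S : Set (Lit α)) : Set (Rule α) :=
  {r' | ∃ r ∈ P, (∀ l ∈ r.nbody, l ∉ S) ∧ r' = ⟨r.head, r.pbody, []⟩}

/-- `S` satisfies all rules of `P`. -/
def SatAll {α : Type} (P : Set (Rule α)) (S : Set (Lit α)) : Prop :=
  ∀ r ∈ P, Satisfies S r

/-- `S` is an answer set of the ground program `P`: `S` is consistent and minimal
among consistent sets of literals satisfying all rules of the reduct `P^S`. -/
def IsAnswerSet {α : Type} (P : Set (Rule α)) (S : Set (Lit α)) : Prop :=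
  Consistent S ∧ SatAll (reduct P S) S ∧
    ∀ T, Consistent T → SatAll (reduct P S) T → T ⊆ S → T = S

/-- A cr-rule  l₀ ←⁺ l_1, …, l_k, not l_{k+1}, …, not l_n, with a single literal head. -/
structure CrRule (α : Type) where
  head : Lit α
  pbody : List (Lit α)
  nbody : List (Lit α)
deriving DecidableEq

/-- α(r): the regular rule obtained from a cr-rule by replacing ←⁺ with ←. -/
def CrRule.alpha {α : Type} (r : CrRule α) : Rule α :=
  ⟨[r.head], r.pbody, r.nbody⟩

/-- `X` is an abductive support of the CR-program `(R, CRs)`. -/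
def IsAbductiveSupport {α : Type} [DecidableEq α]
    (R : Finset (Rule α)) (CRs X : Finset (CrRule α)) : Prop :=
  X ⊆ CRs ∧ (∃ S, IsAnswerSet ((R : Set (Rule α)) ∪ ↑(X.image CrRule.alpha)) S) ∧
    ∀ Y ⊆ CRs, (∃ S, IsAnswerSet ((R : Set (Rule α)) ∪ ↑(Y.image CrRule.alpha)) S) → X.card ≤ Y.card

/-- `A` is an answer set of the CR-program `(R, CRs)`. -/
def IsCrAnswerSet {α : Type} [DecidableEq α]
    (R : Finset (Rule α)) (CRs : Finset (CrRule α)) (A : Set (Lit α)) : Prop :=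
  ∃ X, IsAbductiveSupport R CRs X ∧ IsAnswerSet ((R : Set (Rule α)) ∪ ↑(X.image CrRule.alpha)) A

/-- A weak constraint  :~ l_1, …, l_k, not l_{k+1}, …, not l_n. -/
structure WeakConstraint (α : Type) where
  pbody : List (Lit α)
  nbody : List (Lit α)
deriving DecidableEq

/-- `S` violates a weak constraint. -/
def ViolatesWC {α : Type} (S : Set (Lit α)) (w : WeakConstraint α) : Prop :=
  (∀ l ∈ w.pbody, l ∈ S) ∧ (∀ l ∈ w.nbody, l ∉ S)

/-- The number of weak constraints of `W` violated by `S`. -/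
noncomputable def violatedCount {α : Type} (W : Finset (WeakConstraint α))
    (S : Set (Lit α)) : ℕ :=
  {w : WeakConstraint α | w ∈ W ∧ ViolatesWC S w}.ncard

/-- `S` is an answer set of the weak-constraint program `(P, W)`. -/
def IsWcAnswerSet {α : Type} (P : Set (Rule α)) (W : Finset (WeakConstraint α))
    (S : Set (Lit α)) : Prop :=
  IsAnswerSet P S ∧ ∀ T, IsAnswerSet P T → violatedCount W S ≤ violatedCount W T

section Translation

variable {α : Type} [DecidableEq α] {N : ℕ}

/-- Atom `a` occurs in the rule `r`. -/
def OccursInRule (a : α) (r : Rule α) : Prop :=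
  ∃ l ∈ r.head ++ r.pbody ++ r.nbody, l.atom = a

/-- Atom `a` occurs in the cr-rule `r`. -/
def OccursInCrRule (a : α) (r : CrRule α) : Prop :=
  ∃ l ∈ r.head :: (r.pbody ++ r.nbody), l.atom = a

/-- The atoms `appl i` are distinct and fresh: they do not occur in the
CR-program `(R, cr 1, …, cr N)`. -/
def FreshAppl (R : Finset (Rule α)) (cr : Fin N → CrRule α) (appl : Fin N → α) : Prop :=
  Function.Injective appl ∧
    ∀ i : Fin N, (∀ r ∈ R, ¬ OccursInRule (appl i) r) ∧
      (∀ j : Fin N, ¬ OccursInCrRule (appl i) (cr j))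

/-- The rule  appl_i ∨ ¬appl_i ← B_i. -/
def choiceRule (cr : Fin N → CrRule α) (appl : Fin N → α) (i : Fin N) : Rule α :=
  ⟨[Lit.pos (appl i), Lit.neg (appl i)], (cr i).pbody, (cr i).nbody⟩

/-- The rule  h_i ← appl_i, B_i. -/
def applRule (cr : Fin N → CrRule α) (appl : Fin N → α) (i : Fin N) : Rule α :=
  ⟨[(cr i).head], Lit.pos (appl i) :: (cr i).pbody, (cr i).nbody⟩

/-- The hard part of the translation τ(Π). -/
def tauHard (R : Finset (Rule α)) (cr : Fin N → CrRule α) (appl : Fin N → α) :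
    Set (Rule α) :=
  ↑R ∪ Set.range (choiceRule cr appl) ∪ Set.range (applRule cr appl)

/-- The i-th weak constraint  :~ appl_i, B_i  of the translation τ(Π). -/
def wcOf (cr : Fin N → CrRule α) (appl : Fin N → α) (i : Fin N) : WeakConstraint α :=
  ⟨Lit.pos (appl i) :: (cr i).pbody, (cr i).nbody⟩

/-- The set of weak constraints of the translation τ(Π). -/
def tauWeak (cr : Fin N → CrRule α) (appl : Fin N → α) : Finset (WeakConstraint α) :=
  Finset.image (wcOf cr appl) Finset.univ

/-- The literals of `S` not formed from any of the fresh atoms `appl i`. -/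
def restrictAway (appl : Fin N → α) (S : Set (Lit α)) : Set (Lit α) :=
  {l ∈ S | ∀ i : Fin N, l.atom ≠ appl i}

end Translation

/-!
An answer set `S` of the hard part of τ(Π) is determined by its restriction `S₀` to the atoms of Π
and the set `J` of indices of the weak constraints it violates: the choice rule for `r_i` fires
exactly when `B_i` holds in `S₀`, and then contributes `appl_i` if `i ∈ J` and `¬appl_i` otherwise.
Adding these guessed literals (`applGuess`) to a set `T` turns answer sets of `R ∪ α(J)` into answer
sets of the hard part and back, because the reducts of the two programs correspond under the same
operation. An answer set built from `(J, T)` violates only constraints indexed by `J`, so minimising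
the number of violated constraints minimises `|J|`.
-/

section AnswerSets

variable {α : Type}

def Rule.BodyHolds (S : Set (Lit α)) (r : Rule α) : Prop :=
  (∀ l ∈ r.pbody, l ∈ S) ∧ ∀ l ∈ r.nbody, l ∉ S

theorem Consistent.subset {S T : Set (Lit α)} (hT : Consistent T) (h : S ⊆ T) : Consistent S :=
  fun a ha => hT a ⟨h ha.1, h ha.2⟩

theorem satAll_reduct_iff {P : Set (Rule α)} {S T : Set (Lit α)} :
    SatAll (reduct P S) T ↔
      ∀ r ∈ P, (∀ l ∈ r.nbody, l ∉ S) → (∀ l ∈ r.pbody, l ∈ T) → ∃ l ∈ r.head, l ∈ T := by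
  constructor
  · intro h r hr hn hp
    exact h ⟨r.head, r.pbody, []⟩ ⟨r, hr, hn, rfl⟩ ⟨hp, List.forall_mem_nil _⟩
  · rintro h _ ⟨r, hr, hn, rfl⟩ ⟨hp, -⟩
    exact h r hr hn hp

theorem IsAnswerSet.exists_mem_head {P : Set (Rule α)} {S : Set (Lit α)} (hS : IsAnswerSet P S)
    {r : Rule α} (hr : r ∈ P) (hB : r.BodyHolds S) : ∃ l ∈ r.head, l ∈ S :=
  satAll_reduct_iff.1 hS.2.1 r hr hB.2 hB.1

theorem IsAnswerSet.exists_supporting_rule {P : Set (Rule α)} {S : Set (Lit α)}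
    (hS : IsAnswerSet P S) {l : Lit α} (hl : l ∈ S) :
    ∃ r ∈ P, l ∈ r.head ∧ r.BodyHolds S := by
  obtain ⟨hcons, hsat, hmin⟩ := hS
  set S' := {l ∈ S | ∃ r ∈ P, l ∈ r.head ∧ r.BodyHolds S}
  have hsat' : SatAll (reduct P S) S' := by
    rw [satAll_reduct_iff] at hsat ⊢
    intro r hr hn hp
    have hpS : ∀ l ∈ r.pbody, l ∈ S := fun l h => (hp l h).1
    obtain ⟨l', hl', hl'S⟩ := hsat r hr hn hpS
    exact ⟨l', hl', hl'S, r, hr, hl', hpS, hn⟩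
  have hS' : S' = S := hmin S' (hcons.subset (Set.sep_subset _ _)) hsat' (Set.sep_subset _ _)
  rw [← hS'] at hl
  exact hl.2

theorem Lit.eq_pos_or_eq_neg_of_atom_eq {l : Lit α} {a : α} (h : l.atom = a) :
    l = Lit.pos a ∨ l = Lit.neg a := by
  cases l <;> simp_all [Lit.atom]

end AnswerSets

section Translation

variable {α : Type} {N : ℕ} {R : Finset (Rule α)} {cr : Fin N → CrRule α} {appl : Fin N → α}

def alphaProgram (R : Finset (Rule α)) (cr : Fin N → CrRule α) (J : Set (Fin N)) :
    Set (Rule α) :=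
  ↑R ∪ CrRule.alpha '' (cr '' J)

/-- The literals over fresh atoms that the choice rules of τ(Π) add to `T` when exactly the
cr-rules indexed by `J` are applied. -/
def applGuess (cr : Fin N → CrRule α) (appl : Fin N → α) (J : Set (Fin N)) (T : Set (Lit α)) :
    Set (Lit α) :=
  (fun i => Lit.pos (appl i)) '' {i | i ∈ J ∧ (cr i).alpha.BodyHolds T} ∪
    (fun i => Lit.neg (appl i)) '' {i | i ∉ J ∧ (cr i).alpha.BodyHolds T}

theorem alpha_mem_alphaProgram {J : Set (Fin N)} {i : Fin N} (hi : i ∈ J) :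
    (cr i).alpha ∈ alphaProgram R cr J :=
  Or.inr ⟨cr i, ⟨i, hi, rfl⟩, rfl⟩

theorem mem_tauHard_of_mem {r : Rule α} (hr : r ∈ R) : r ∈ tauHard R cr appl :=
  Or.inl (Or.inl hr)

theorem choiceRule_mem_tauHard (i : Fin N) : choiceRule cr appl i ∈ tauHard R cr appl :=
  Or.inl (Or.inr ⟨i, rfl⟩)

theorem applRule_mem_tauHard (i : Fin N) : applRule cr appl i ∈ tauHard R cr appl :=
  Or.inr ⟨i, rfl⟩

theorem FreshAppl.atom_ne_of_mem_rule (hfresh : FreshAppl R cr appl) {r : Rule α} (hr : r ∈ R)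
    {l : Lit α} (hl : l ∈ r.head ++ r.pbody ++ r.nbody) (i : Fin N) : l.atom ≠ appl i :=
  fun h => (hfresh.2 i).1 r hr ⟨l, hl, h⟩

theorem FreshAppl.atom_ne_of_mem_crRule (hfresh : FreshAppl R cr appl) (j : Fin N) {l : Lit α}
    (hl : l ∈ (cr j).head :: ((cr j).pbody ++ (cr j).nbody)) (i : Fin N) : l.atom ≠ appl i :=
  fun h => (hfresh.2 i).2 j ⟨l, hl, h⟩

theorem FreshAppl.head_atom_ne (hfresh : FreshAppl R cr appl) (j i : Fin N) :
    (cr j).head.atom ≠ appl i :=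
  hfresh.atom_ne_of_mem_crRule j List.mem_cons_self i

theorem FreshAppl.atom_ne_of_mem_pbody (hfresh : FreshAppl R cr appl) {j : Fin N} {l : Lit α}
    (hl : l ∈ (cr j).pbody) (i : Fin N) : l.atom ≠ appl i :=
  hfresh.atom_ne_of_mem_crRule j (List.mem_cons_of_mem _ (List.mem_append_left _ hl)) i

theorem FreshAppl.atom_ne_of_mem_nbody (hfresh : FreshAppl R cr appl) {j : Fin N} {l : Lit α}
    (hl : l ∈ (cr j).nbody) (i : Fin N) : l.atom ≠ appl i :=
  hfresh.atom_ne_of_mem_crRule j (List.mem_cons_of_mem _ (List.mem_append_right _ hl)) i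

theorem wcOf_injective (hinj : Function.Injective appl) : Function.Injective (wcOf cr appl) :=
  fun _ _ h => hinj (Lit.pos.inj (List.cons.inj (congrArg WeakConstraint.pbody h)).1)

theorem violatesWC_wcOf_iff {S : Set (Lit α)} {i : Fin N} :
    ViolatesWC S (wcOf cr appl i) ↔ Lit.pos (appl i) ∈ S ∧ (cr i).alpha.BodyHolds S := by
  simp [ViolatesWC, wcOf, Rule.BodyHolds, CrRule.alpha, and_assoc]

theorem mem_restrictAway_iff {S : Set (Lit α)} {l : Lit α} (hl : ∀ i, l.atom ≠ appl i) :
    l ∈ restrictAway appl S ↔ l ∈ S :=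
  and_iff_left hl

theorem bodyHolds_restrictAway_iff (hfresh : FreshAppl R cr appl) (i : Fin N) {S : Set (Lit α)} :
    (cr i).alpha.BodyHolds (restrictAway appl S) ↔ (cr i).alpha.BodyHolds S :=
  and_congr (forall₂_congr fun _ hl => mem_restrictAway_iff (hfresh.atom_ne_of_mem_pbody hl))
    (forall₂_congr fun _ hl => not_congr (mem_restrictAway_iff (hfresh.atom_ne_of_mem_nbody hl)))

section Guess

variable {J : Set (Fin N)} {T U : Set (Lit α)}

theorem mem_union_applGuess_iff {l : Lit α} (hl : ∀ i, l.atom ≠ appl i) :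
    l ∈ U ∪ applGuess cr appl J T ↔ l ∈ U := by
  refine or_iff_left ?_
  rintro (⟨i, -, rfl⟩ | ⟨i, -, rfl⟩) <;> exact hl i rfl

theorem pos_mem_union_applGuess (hinj : Function.Injective appl)
    (hU : ∀ l ∈ U, ∀ i, l.atom ≠ appl i) {i : Fin N} :
    Lit.pos (appl i) ∈ U ∪ applGuess cr appl J T ↔ i ∈ J ∧ (cr i).alpha.BodyHolds T := by
  rw [Set.mem_union, or_iff_right fun h => hU _ h i rfl]
  simp [applGuess, hinj.eq_iff]

theorem neg_mem_union_applGuess (hinj : Function.Injective appl)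
    (hU : ∀ l ∈ U, ∀ i, l.atom ≠ appl i) {i : Fin N} :
    Lit.neg (appl i) ∈ U ∪ applGuess cr appl J T ↔ i ∉ J ∧ (cr i).alpha.BodyHolds T := by
  rw [Set.mem_union, or_iff_right fun h => hU _ h i rfl]
  simp [applGuess, hinj.eq_iff]

theorem restrictAway_union_applGuess (hU : ∀ l ∈ U, ∀ i, l.atom ≠ appl i) :
    restrictAway appl (U ∪ applGuess cr appl J T) = U := by
  ext l
  exact ⟨fun h => (mem_union_applGuess_iff h.2).1 h.1, fun h => ⟨Or.inl h, hU l h⟩⟩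

theorem Consistent.union_applGuess (hinj : Function.Injective appl) (hT : Consistent T)
    (hTa : ∀ l ∈ T, ∀ i, l.atom ≠ appl i) : Consistent (T ∪ applGuess cr appl J T) := by
  rintro a ⟨hpos, hneg⟩
  by_cases ha : ∃ i, a = appl i
  · obtain ⟨i, rfl⟩ := ha
    exact ((neg_mem_union_applGuess hinj hTa).1 hneg).1
      ((pos_mem_union_applGuess hinj hTa).1 hpos).1
  · simp only [not_exists] at ha
    exact hT a ⟨(mem_union_applGuess_iff (l := Lit.pos a) ha).1 hpos,
      (mem_union_applGuess_iff (l := Lit.neg a) ha).1 hneg⟩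

theorem mem_of_choiceRule (hinj : Function.Injective appl) (hTa : ∀ l ∈ T, ∀ i, l.atom ≠ appl i)
    (hU : SatAll (reduct (tauHard R cr appl) (T ∪ applGuess cr appl J T)) U)
    (hUsub : U ⊆ T ∪ applGuess cr appl J T) {i : Fin N}
    (hn : ∀ l ∈ (cr i).nbody, l ∉ T ∪ applGuess cr appl J T) (hp : ∀ l ∈ (cr i).pbody, l ∈ U) :
    (i ∈ J → Lit.pos (appl i) ∈ U) ∧ (i ∉ J → Lit.neg (appl i) ∈ U) := by
  obtain ⟨l, hl, hlU⟩ := satAll_reduct_iff.1 hU _ (choiceRule_mem_tauHard i) hn hp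
  simp only [choiceRule, List.mem_cons, List.not_mem_nil, or_false] at hl
  rcases hl with rfl | rfl
  · have hi := ((pos_mem_union_applGuess hinj hTa).1 (hUsub hlU)).1
    exact ⟨fun _ => hlU, fun h => absurd hi h⟩
  · have hi := ((neg_mem_union_applGuess hinj hTa).1 (hUsub hlU)).1
    exact ⟨fun h => absurd h hi, fun _ => hlU⟩

theorem satAll_reduct_tauHard_union_applGuess (hfresh : FreshAppl R cr appl)
    (hTa : ∀ l ∈ T, ∀ i, l.atom ≠ appl i) (hUT : U ⊆ T)
    (hU : SatAll (reduct (alphaProgram R cr J) T) U) :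
    SatAll (reduct (tauHard R cr appl) (T ∪ applGuess cr appl J T))
      (U ∪ applGuess cr appl J T) := by
  have hUa : ∀ l ∈ U, ∀ i, l.atom ≠ appl i := fun l hl => hTa l (hUT hl)
  rw [satAll_reduct_iff] at hU ⊢
  rintro r ((hr | ⟨i, rfl⟩) | ⟨i, rfl⟩) hn hp
  · obtain ⟨l, hl, hlU⟩ := hU r (Or.inl hr) (fun l h hlT => hn l h (Or.inl hlT)) fun l h =>
      (mem_union_applGuess_iff (hfresh.atom_ne_of_mem_rule hr (by simp [h]))).1 (hp l h)
    exact ⟨l, hl, Or.inl hlU⟩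
  · have hB : (cr i).alpha.BodyHolds T :=
      ⟨fun l h => hUT ((mem_union_applGuess_iff
          (hfresh.atom_ne_of_mem_pbody h)).1 (hp l h)),
        fun l h hlT => hn l h (Or.inl hlT)⟩
    by_cases hi : i ∈ J
    · exact ⟨_, by simp [choiceRule], (pos_mem_union_applGuess hfresh.1 hUa).2 ⟨hi, hB⟩⟩
    · exact ⟨_, by simp [choiceRule], (neg_mem_union_applGuess hfresh.1 hUa).2 ⟨hi, hB⟩⟩
  · obtain ⟨hi, hB⟩ := (pos_mem_union_applGuess hfresh.1 hUa).1 (hp _ List.mem_cons_self)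
    obtain ⟨l, hl, hlU⟩ := hU _ (alpha_mem_alphaProgram hi) hB.2 fun l h =>
      (mem_union_applGuess_iff (hfresh.atom_ne_of_mem_pbody h)).1
        (hp l (List.mem_cons_of_mem _ h))
    exact ⟨l, hl, Or.inl hlU⟩

theorem satAll_reduct_alphaProgram_restrictAway (hfresh : FreshAppl R cr appl)
    (hTa : ∀ l ∈ T, ∀ i, l.atom ≠ appl i) (hUsub : U ⊆ T ∪ applGuess cr appl J T)
    (hU : SatAll (reduct (tauHard R cr appl) (T ∪ applGuess cr appl J T)) U) :
    SatAll (reduct (alphaProgram R cr J) T) (restrictAway appl U) := by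
  rw [satAll_reduct_iff]
  rintro r (hr | ⟨_, ⟨i, hi, rfl⟩, rfl⟩) hn hp
  · obtain ⟨l, hl, hlU⟩ := satAll_reduct_iff.1 hU r (mem_tauHard_of_mem hr)
      (fun l h hlT => hn l h ((mem_union_applGuess_iff
        (hfresh.atom_ne_of_mem_rule hr (by simp [h]))).1 hlT))
      fun l h => (hp l h).1
    exact ⟨l, hl, hlU, hfresh.atom_ne_of_mem_rule hr (by simp [hl])⟩
  · have hn' : ∀ l ∈ (cr i).nbody, l ∉ T ∪ applGuess cr appl J T := fun l h hlT =>
      hn l h ((mem_union_applGuess_iff (hfresh.atom_ne_of_mem_nbody h)).1 hlT)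
    have hpU : ∀ l ∈ (cr i).pbody, l ∈ U := fun l h => (hp l h).1
    have hpos := (mem_of_choiceRule hfresh.1 hTa hU hUsub hn' hpU).1 hi
    obtain ⟨l, hl, hlU⟩ := satAll_reduct_iff.1 hU _ (applRule_mem_tauHard i) hn'
      (List.forall_mem_cons.2 ⟨hpos, hpU⟩)
    obtain rfl : l = (cr i).head := List.mem_singleton.1 hl
    exact ⟨_, hl, hlU, hfresh.head_atom_ne i⟩

theorem isAnswerSet_tauHard_union_applGuess_iff (hfresh : FreshAppl R cr appl)
    (hTa : ∀ l ∈ T, ∀ i, l.atom ≠ appl i) :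
    IsAnswerSet (tauHard R cr appl) (T ∪ applGuess cr appl J T) ↔
      IsAnswerSet (alphaProgram R cr J) T := by
  have hrestrict : restrictAway appl (T ∪ applGuess cr appl J T) = T :=
    restrictAway_union_applGuess hTa
  constructor
  · rintro ⟨hcons, hsat, hmin⟩
    have hsat' := satAll_reduct_alphaProgram_restrictAway hfresh hTa subset_rfl hsat
    rw [hrestrict] at hsat'
    refine ⟨hcons.subset Set.subset_union_left, hsat', fun U hUc hU hUT => ?_⟩
    have hUG : U ∪ applGuess cr appl J T ⊆ T ∪ applGuess cr appl J T :=
      Set.union_subset_union_left _ hUT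
    have hUG_eq := hmin _ (hcons.subset hUG)
      (satAll_reduct_tauHard_union_applGuess hfresh hTa hUT hU) hUG
    rw [← restrictAway_union_applGuess (fun l hl => hTa l (hUT hl)) (J := J) (T := T),
      hUG_eq, hrestrict]
  · rintro ⟨hcons, hsat, hmin⟩
    refine ⟨hcons.union_applGuess hfresh.1 hTa,
      satAll_reduct_tauHard_union_applGuess hfresh hTa subset_rfl hsat,
      fun U hUc hU hUsub => hUsub.antisymm ?_⟩
    have hU₀ : restrictAway appl U = T := by
      refine hmin _ (hUc.subset (Set.sep_subset _ _))
        (satAll_reduct_alphaProgram_restrictAway hfresh hTa hUsub hU) ?_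
      exact hrestrict ▸ fun l hl => ⟨hUsub hl.1, hl.2⟩
    have hTU : T ⊆ U := hU₀ ▸ Set.sep_subset _ _
    have hforced : ∀ i, (cr i).alpha.BodyHolds T →
        (i ∈ J → Lit.pos (appl i) ∈ U) ∧ (i ∉ J → Lit.neg (appl i) ∈ U) := fun i hB =>
      mem_of_choiceRule hfresh.1 hTa hU hUsub
        (fun l h hlT => hB.2 l h ((mem_union_applGuess_iff
          (hfresh.atom_ne_of_mem_nbody h)).1 hlT))
        fun l h => hTU (hB.1 l h)
    rintro l (hl | ⟨i, ⟨hi, hB⟩, rfl⟩ | ⟨i, ⟨hi, hB⟩, rfl⟩)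
    · exact hTU hl
    · exact (hforced i hB).1 hi
    · exact (hforced i hB).2 hi

end Guess

theorem IsAnswerSet.bodyHolds_of_atom_eq (hfresh : FreshAppl R cr appl) {S : Set (Lit α)}
    (hS : IsAnswerSet (tauHard R cr appl) S) {l : Lit α} (hl : l ∈ S) {i : Fin N}
    (hli : l.atom = appl i) : (cr i).alpha.BodyHolds S := by
  obtain ⟨r, (hr | ⟨j, rfl⟩) | ⟨j, rfl⟩, hlr, hB⟩ := hS.exists_supporting_rule hl
  · exact absurd hli (hfresh.atom_ne_of_mem_rule hr (by simp [hlr]) i)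
  · have hlj : l.atom = appl j := by
      simp only [choiceRule, List.mem_cons, List.not_mem_nil, or_false] at hlr
      rcases hlr with rfl | rfl <;> rfl
    rwa [hfresh.1 (hli.symm.trans hlj)]
  · obtain rfl : l = (cr j).head := List.mem_singleton.1 hlr
    exact absurd hli (hfresh.head_atom_ne j i)

theorem IsAnswerSet.eq_union_applGuess (hfresh : FreshAppl R cr appl) {S : Set (Lit α)}
    (hS : IsAnswerSet (tauHard R cr appl) S) :
    S = restrictAway appl S ∪
      applGuess cr appl {i | ViolatesWC S (wcOf cr appl i)} (restrictAway appl S) := by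
  have hSa : ∀ l ∈ restrictAway appl S, ∀ i, l.atom ≠ appl i := fun _ hl => hl.2
  ext l
  by_cases hfr : ∃ i, l.atom = appl i
  · obtain ⟨i, hi⟩ := hfr
    rcases Lit.eq_pos_or_eq_neg_of_atom_eq hi with rfl | rfl
    · rw [pos_mem_union_applGuess hfresh.1 hSa, bodyHolds_restrictAway_iff hfresh,
        Set.mem_ofPred_eq, violatesWC_wcOf_iff]
      exact ⟨fun h => ⟨⟨h, hS.bodyHolds_of_atom_eq hfresh h rfl⟩,
        hS.bodyHolds_of_atom_eq hfresh h rfl⟩, fun h => h.1.1⟩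
    · rw [neg_mem_union_applGuess hfresh.1 hSa, bodyHolds_restrictAway_iff hfresh,
        Set.mem_ofPred_eq, violatesWC_wcOf_iff]
      refine ⟨fun h => ⟨fun hv => hS.1 _ ⟨hv.1, h⟩, hS.bodyHolds_of_atom_eq hfresh h rfl⟩, ?_⟩
      rintro ⟨hv, hB⟩
      obtain ⟨l, hl, hlS⟩ := hS.exists_mem_head (choiceRule_mem_tauHard i) hB
      simp only [choiceRule, List.mem_cons, List.not_mem_nil, or_false] at hl
      rcases hl with rfl | rfl
      · exact absurd ⟨hlS, hB⟩ hv
      · exact hlS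
  · simp only [not_exists] at hfr
    rw [mem_union_applGuess_iff hfr, mem_restrictAway_iff hfr]

theorem IsAnswerSet.restrictAway_isAnswerSet_alphaProgram (hfresh : FreshAppl R cr appl)
    {S : Set (Lit α)} (hS : IsAnswerSet (tauHard R cr appl) S) :
    IsAnswerSet (alphaProgram R cr {i | ViolatesWC S (wcOf cr appl i)}) (restrictAway appl S) := by
  rw [← isAnswerSet_tauHard_union_applGuess_iff hfresh fun _ hl => hl.2,
    ← hS.eq_union_applGuess hfresh]
  exact hS

theorem IsAnswerSet.atom_ne_of_alphaProgram (hfresh : FreshAppl R cr appl) {J : Set (Fin N)}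
    {T : Set (Lit α)} (hT : IsAnswerSet (alphaProgram R cr J) T) :
    ∀ l ∈ T, ∀ i, l.atom ≠ appl i := by
  intro l hl
  obtain ⟨r, hr | ⟨_, ⟨j, -, rfl⟩, rfl⟩, hlr, -⟩ := hT.exists_supporting_rule hl
  · exact hfresh.atom_ne_of_mem_rule hr (by simp [hlr])
  · obtain rfl : l = (cr j).head := List.mem_singleton.1 hlr
    exact hfresh.head_atom_ne j

theorem IsAnswerSet.exists_isAnswerSet_tauHard (hfresh : FreshAppl R cr appl) {J : Set (Fin N)}
    {T : Set (Lit α)} (hT : IsAnswerSet (alphaProgram R cr J) T) :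
    ∃ S, IsAnswerSet (tauHard R cr appl) S ∧ ∀ i, ViolatesWC S (wcOf cr appl i) → i ∈ J := by
  have hTa := hT.atom_ne_of_alphaProgram hfresh
  refine ⟨_, (isAnswerSet_tauHard_union_applGuess_iff hfresh hTa).2 hT, fun i hi => ?_⟩
  exact ((pos_mem_union_applGuess hfresh.1 hTa).1 (violatesWC_wcOf_iff.1 hi).1).1

open Classical in
theorem violatedCount_eq_card_filter (W : Finset (WeakConstraint α)) (S : Set (Lit α)) :
    violatedCount W S = (W.filter (ViolatesWC S)).card := by
  rw [violatedCount, ← Set.ncard_coe_finset, Finset.coe_filter]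

open Classical in
theorem violatedCount_tauWeak [DecidableEq α] (hinj : Function.Injective appl) (S : Set (Lit α)) :
    violatedCount (tauWeak cr appl) S =
      (Finset.univ.filter fun i : Fin N => ViolatesWC S (wcOf cr appl i)).card := by
  rw [violatedCount_eq_card_filter, tauWeak, Finset.filter_image,
    Finset.card_image_of_injective _ (wcOf_injective hinj)]

theorem union_coe_image_alpha_eq_alphaProgram {Y : Finset (CrRule α)} [DecidableEq α]
    (hY : ↑Y ⊆ Set.range cr) :
    (R : Set (Rule α)) ∪ ↑(Y.image CrRule.alpha) = alphaProgram R cr (cr ⁻¹' ↑Y) := by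
  rw [alphaProgram, Set.image_preimage_eq_of_subset hY, Finset.coe_image]

end Translation

open Classical in
theorem translation_answerSet_violated_is_abductiveSupport_general
    {α : Type} [DecidableEq α] {N : ℕ}
    (R : Finset (Rule α)) (cr : Fin N → CrRule α) (hcr : Function.Injective cr)
    (appl : Fin N → α) (hfresh : FreshAppl R cr appl)
    (S : Set (Lit α))
    (hS : IsWcAnswerSet (tauHard R cr appl) (tauWeak cr appl) S) :
    IsAbductiveSupport R (Finset.image cr Finset.univ)
        (Finset.image cr
          (Finset.univ.filter (fun i : Fin N => ViolatesWC S (wcOf cr appl i)))) ∧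
      violatedCount (tauWeak cr appl) S =
        (Finset.image cr
          (Finset.univ.filter (fun i : Fin N => ViolatesWC S (wcOf cr appl i)))).card := by
  obtain ⟨hS, hSmin⟩ := hS
  set J := Finset.univ.filter fun i : Fin N => ViolatesWC S (wcOf cr appl i)
  have hcount := violatedCount_tauWeak (cr := cr) hfresh.1
  have hcard : (J.image cr).card = J.card := Finset.card_image_of_injective _ hcr
  have hrange {Y : Finset (CrRule α)} (hY : Y ⊆ Finset.univ.image cr) : ↑Y ⊆ Set.range cr := by
    simpa using Finset.coe_subset.2 hY
  refine ⟨⟨Finset.image_subset_image (Finset.filter_subset _ _), ⟨restrictAway appl S, ?_⟩,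
    fun Y hY ⟨T, hT⟩ => ?_⟩, by rw [hcount, hcard]⟩
  · rw [union_coe_image_alpha_eq_alphaProgram (hrange (Finset.image_subset_image
      (Finset.filter_subset _ _))), Finset.coe_image, Set.preimage_image_eq _ hcr]
    simpa [J] using hS.restrictAway_isAnswerSet_alphaProgram hfresh
  · rw [union_coe_image_alpha_eq_alphaProgram (hrange hY)] at hT
    obtain ⟨S', hS', hviol⟩ := hT.exists_isAnswerSet_tauHard hfresh
    calc (J.image cr).card = violatedCount (tauWeak cr appl) S := by rw [hcard, hcount]
      _ ≤ violatedCount (tauWeak cr appl) S' := hSmin S' hS'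
      _ ≤ Y.card := by
        rw [hcount]
        exact Finset.card_le_card_of_injOn cr (fun i hi => hviol i (Finset.mem_filter.1 hi).2)
          hcr.injOn

open Classical in
/-- If `S` is an answer set of the weak-constraint translation τ(Π)
of the finite ground CR-program Π = (R, CR), then
X = {r_i ∈ CR : S violates the i-th weak constraint :~ appl_i, B_i} is an abductive
support of Π, and the number of weak constraints of τ(Π) violated by `S` equals the
cardinality of X. -/
theorem translation_answerSet_violated_is_abductiveSupport
    {α : Type} [DecidableEq α] [Countable α] {N : ℕ}
    (R : Finset (Rule α)) (cr : Fin N → CrRule α) (hcr : Function.Injective cr)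
    (appl : Fin N → α) (hfresh : FreshAppl R cr appl)
    (S : Set (Lit α))
    (hS : IsWcAnswerSet (tauHard R cr appl) (tauWeak cr appl) S) :
    IsAbductiveSupport R (Finset.image cr Finset.univ)
        (Finset.image cr
          (Finset.univ.filter (fun i : Fin N => ViolatesWC S (wcOf cr appl i)))) ∧
      violatedCount (tauWeak cr appl) S =
        (Finset.image cr
          (Finset.univ.filter (fun i : Fin N => ViolatesWC S (wcOf cr appl i)))).card :=
  translation_answerSet_violated_is_abductiveSupport_general R cr hcr appl hfresh S hS
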